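/- arXiv:2212.14425 — 7 statements merged into one kernel-verified Lean document; each statement's English description precedes it below -/
import Mathlib

section
/- Let G = (V, E) be a finite simple graph and let ŵ, w : E → ℝ be two edge-weight functions. Let M₁* be a maximum ŵ-weight matching of G and let M₂* be a maximum w-weight matching of G. If Σ_{e∈E} |ŵ(e) − w(e)| ≤ γ · ŵ(M₁*) for a real number γ, then ŵ(M₂*) ≥ (1 − 2γ) · ŵ(M₁*). -/
open Finset
open scoped Classical

variable {V : Type*}

/-- `M` is a matching of the simple graph `G`: a set of edges of `G`,
no two of which share an endpoint. -/
def IsMatching (G : SimpleGraph V) (M : Finset (Sym2 V)) : Prop :=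
  (M : Set (Sym2 V)) ⊆ G.edgeSet ∧
    ∀ e ∈ M, ∀ f ∈ M, e ≠ f → ∀ v : V, v ∈ e → v ∉ f

/-- The total weight of a finite set of edges. -/
def mWeight (w : Sym2 V → ℝ) (M : Finset (Sym2 V)) : ℝ := ∑ e ∈ M, w e

/-- A vertex is `M`-free if it is not an endpoint of any edge of `M`. -/
def IsFreeVtx (M : Finset (Sym2 V)) (v : V) : Prop := ∀ e ∈ M, v ∉ e

/-- `yz(e) = y(u) + y(v) + ∑_{B ∈ Ω, u ∈ B, v ∈ B} z(B)` for an edge `e = uv`. -/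
noncomputable def yzval (y : V → ℝ) (Ω : Finset (Finset V)) (z : Finset V → ℝ) :
    Sym2 V → ℝ :=
  Sym2.lift ⟨fun u v => y u + y v + ∑ B ∈ Ω, (if u ∈ B ∧ v ∈ B then z B else 0),
    fun u v => by
      have h : ∀ B : Finset V, (u ∈ B ∧ v ∈ B) = (v ∈ B ∧ u ∈ B) :=
        fun B => propext and_comm
      simp only [h]
      ring⟩

/-- `‖e‖ = (‖u‖ + ‖v‖)/2` for an edge `e = uv`, given vertex weights `‖·‖`. -/
def edgeNorm (nrm : V → ℕ) : Sym2 V → ℕ :=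
  Sym2.lift ⟨fun u v => (nrm u + nrm v) / 2, fun u v => by simp [Nat.add_comm]⟩

/-- A walk is alternating (for a path starting at a free vertex): its edges at even
positions are unmatched and its edges at odd positions are matched. -/
def IsAlternating (G : SimpleGraph V) (M : Finset (Sym2 V)) {u v : V}
    (p : G.Walk u v) : Prop :=
  ∀ (i : ℕ) (h : i < p.edges.length), (p.edges.get ⟨i, h⟩ ∈ M ↔ i % 2 = 1)

/-- If the total pointwise weight difference between `ŵ` and `w` over the
edges of `G` is at most `γ · ŵ(M₁*)`, where `M₁*` is a maximum `ŵ`-weight matching and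
`M₂*` is a maximum `w`-weight matching, then `ŵ(M₂*) ≥ (1 − 2γ) · ŵ(M₁*)`. -/
theorem mwm_weight_perturbation
    [Fintype V] [DecidableEq V]
    (G : SimpleGraph V) [DecidableRel G.Adj]
    (what w : Sym2 V → ℝ) (γ : ℝ)
    (M1 M2 : Finset (Sym2 V))
    (hM1 : IsMatching G M1)
    (hM1max : ∀ N : Finset (Sym2 V), IsMatching G N → mWeight what N ≤ mWeight what M1)
    (hM2 : IsMatching G M2)
    (hM2max : ∀ N : Finset (Sym2 V), IsMatching G N → mWeight w N ≤ mWeight w M2)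
    (hdiff : ∑ e ∈ G.edgeFinset, |what e - w e| ≤ γ * mWeight what M1) :
    (1 - 2 * γ) * mWeight what M1 ≤ mWeight what M2 := by
  set S := ∑ e ∈ G.edgeFinset, |what e - w e| with hS
  have key : ∀ M : Finset (Sym2 V), IsMatching G M →
      |mWeight what M - mWeight w M| ≤ S := by
    intro M hM
    have hsub : M ⊆ G.edgeFinset := by
      intro e he
      rw [SimpleGraph.mem_edgeFinset]
      exact hM.1 he
    calc |mWeight what M - mWeight w M|
        = |∑ e ∈ M, (what e - w e)| := by
          simp [mWeight, Finset.sum_sub_distrib]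
      _ ≤ ∑ e ∈ M, |what e - w e| := Finset.abs_sum_le_sum_abs _ _
      _ ≤ S := Finset.sum_le_sum_of_subset_of_nonneg hsub
          (fun e _ _ => abs_nonneg _)
  have h1 := key M1 hM1
  have h2 := key M2 hM2
  have h3 := hM2max M1 hM1
  have := abs_le.mp h1
  have := abs_le.mp h2
  nlinarith [hdiff]
end

section
/- Let G = (V, E) be a finite simple graph, let y : V → ℝ be nonnegative, let ℬ be a finite family of subsets of V each of odd cardinality, and let z : ℬ → ℝ be nonnegative. Then for every matching N of G, Σ_{e=uv∈N} yz(e) ≤ Σ_{u∈V} y(u) + Σ_{B∈ℬ} ((|B|−1)/2) · z(B), where yz(e) = y(u) + y(v) + Σ_{B∈ℬ : u∈B and v∈B} z(B). -/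
open Finset
open scoped Classical

variable {V : Type*}

/-- Weak duality for Edmonds' odd-set LP: for nonnegative vertex duals `y`
and nonnegative odd-set duals `z` on a finite family `ℬ` of odd-cardinality vertex subsets,
every matching `N` satisfies
`∑_{e ∈ N} yz(e) ≤ ∑_{u ∈ V} y(u) + ∑_{B ∈ ℬ} ((|B|−1)/2) · z(B)`. -/
theorem mwm_weak_duality
    [Fintype V] [DecidableEq V]
    (G : SimpleGraph V)
    (y : V → ℝ) (hy : ∀ v : V, 0 ≤ y v)
    (ℬ : Finset (Finset V)) (hodd : ∀ B ∈ ℬ, Odd B.card)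
    (z : Finset V → ℝ) (hz : ∀ B ∈ ℬ, 0 ≤ z B)
    (N : Finset (Sym2 V)) (hN : IsMatching G N) :
    ∑ e ∈ N, yzval y ℬ z e ≤
      ∑ u : V, y u + ∑ B ∈ ℬ, ((B.card : ℝ) - 1) / 2 * z B := by
  classical
  -- rewrite yzval for edges of the matching
  have key : ∀ e ∈ N, yzval y ℬ z e =
      (∑ w : V, if w ∈ e then y w else 0) +
      ∑ B ∈ ℬ, (if (∀ w ∈ e, w ∈ B) then z B else 0) := by
    intro e he
    have heE : e ∈ G.edgeSet := hN.1 he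
    induction e using Sym2.ind with
    | _ u v =>
      have hadj : G.Adj u v := heE
      have huv : u ≠ v := hadj.ne
      have h1 : (Finset.univ.filter (· ∈ s(u, v))) = {u, v} := by
        ext w; simp [Sym2.mem_iff]
      have h2 : (∑ w : V, if w ∈ s(u, v) then y w else 0) = y u + y v := by
        rw [← Finset.sum_filter, h1, Finset.sum_pair huv]
      have h3 : ∀ B : Finset V, (∀ w ∈ s(u, v), w ∈ B) ↔ (u ∈ B ∧ v ∈ B) := by
        intro B
        constructor
        · intro h; exact ⟨h u (by simp), h v (by simp)⟩
        · rintro ⟨h1, h2⟩ w hw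
          rcases Sym2.mem_iff.mp hw with rfl | rfl <;> assumption
      simp only [yzval, Sym2.lift_mk, h2]
      congr 1
      apply Finset.sum_congr rfl
      intro B _
      simp [h3 B, and_comm]
  rw [Finset.sum_congr rfl key, Finset.sum_add_distrib]
  have part1 : ∑ e ∈ N, (∑ w : V, if w ∈ e then y w else 0) ≤ ∑ u : V, y u := by
    rw [Finset.sum_comm]
    apply Finset.sum_le_sum
    intro w _
    have : ∑ e ∈ N, (if w ∈ e then y w else 0) =
        (N.filter (fun e => w ∈ e)).card • y w := by
      rw [← Finset.sum_filter, Finset.sum_const]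
    rw [this]
    have hcard : (N.filter (fun e => w ∈ e)).card ≤ 1 := by
      apply Finset.card_le_one.mpr
      intro a ha b hb
      simp only [Finset.mem_filter] at ha hb
      by_contra hne
      exact hN.2 a ha.1 b hb.1 hne w ha.2 hb.2
    interval_cases h : (N.filter (fun e => w ∈ e)).card
    · simp [hy w]
    · simp
  have part2 : ∑ e ∈ N, (∑ B ∈ ℬ, if (∀ w ∈ e, w ∈ B) then z B else 0) ≤
      ∑ B ∈ ℬ, ((B.card : ℝ) - 1) / 2 * z B := by
    rw [Finset.sum_comm]
    apply Finset.sum_le_sum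
    intro B hB
    set M := N.filter (fun e => ∀ w ∈ e, w ∈ B) with hM
    have hsum : ∑ e ∈ N, (if (∀ w ∈ e, w ∈ B) then z B else 0) = (M.card : ℝ) * z B := by
      rw [← Finset.sum_filter, ← hM, Finset.sum_const]
      simp [mul_comm]
    rw [hsum]
    -- counting: 2 * M.card + 1 ≤ B.card
    have hcount : 2 * M.card < B.card := by
      set F : Sym2 V → Finset V := fun e => Finset.univ.filter (· ∈ e) with hF
      have hdisj : ∀ e ∈ M, ∀ f ∈ M, e ≠ f → Disjoint (F e) (F f) := by
        intro e he f hf hef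
        rw [Finset.disjoint_left]
        intro w hwe hwf
        simp only [hF, Finset.mem_filter] at hwe hwf
        exact hN.2 e (Finset.mem_filter.mp he).1 f (Finset.mem_filter.mp hf).1 hef w
          hwe.2 hwf.2
      have hcard2 : ∀ e ∈ M, (F e).card = 2 := by
        intro e he
        have heE : e ∈ G.edgeSet := hN.1 (Finset.mem_filter.mp he).1
        induction e using Sym2.ind with
        | _ u v =>
          have huv : u ≠ v := (show G.Adj u v from heE).ne
          have : F s(u, v) = {u, v} := by ext w; simp [hF, Sym2.mem_iff]
          rw [this, Finset.card_pair huv]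
      have hsub : M.biUnion F ⊆ B := by
        intro w hw
        obtain ⟨e, he, hwe⟩ := Finset.mem_biUnion.mp hw
        simp only [hF, Finset.mem_filter] at hwe
        exact (Finset.mem_filter.mp he).2 w hwe.2
      have h2c : (M.biUnion F).card = 2 * M.card := by
        rw [Finset.card_biUnion hdisj]
        rw [Finset.sum_congr rfl hcard2]
        simp [mul_comm]
      have hle : 2 * M.card ≤ B.card := h2c ▸ Finset.card_le_card hsub
      rcases lt_or_eq_of_le hle with h | h
      · exact h
      · exfalso
        have := hodd B hB
        rw [← h] at this
        simp [Nat.odd_iff, Nat.mul_mod_right] at this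
    have hreal : (M.card : ℝ) ≤ ((B.card : ℝ) - 1) / 2 := by
      have : (2 * M.card + 1 : ℕ) ≤ B.card := hcount
      have h' : (2 * (M.card : ℝ) + 1) ≤ (B.card : ℝ) := by exact_mod_cast this
      linarith
    exact mul_le_mul_of_nonneg_right hreal (hz B hB)
  linarith
end

section
/- Let G = (V, E) be a finite simple graph, M a matching of G, and F the set of M-free vertices. Let y : V → ℝ, let Ω be a finite family of subsets of V each of odd cardinality, and let z : Ω → ℝ. Suppose every B ∈ Ω is full with respect to M, i.e. the number of edges of M with both endpoints in B equals (|B|−1)/2. Then Σ_{e=uv∈M} yz(e) = Σ_{u∈V∖F} y(u) + Σ_{B∈Ω} ((|B|−1)/2) · z(B), where yz(e) = y(u) + y(v) + Σ_{B∈Ω : u∈B and v∈B} z(B). -/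
open Finset
open scoped Classical

variable {V : Type*}

namespace IsMatching

variable {G : SimpleGraph V} {M : Finset (Sym2 V)}

lemma not_isDiag (hM : IsMatching G M) {e : Sym2 V} (he : e ∈ M) : ¬ e.IsDiag :=
  G.not_isDiag_of_mem_edgeSet (hM.1 he)

lemma pairwiseDisjoint_toFinset [DecidableEq V] (hM : IsMatching G M) :
    (M : Set (Sym2 V)).PairwiseDisjoint Sym2.toFinset := fun e he f hf hef =>
  Finset.disjoint_left.2 fun v hve hvf =>
    hM.2 e he f hf hef v (Sym2.mem_toFinset.1 hve) (Sym2.mem_toFinset.1 hvf)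

lemma sum_sum_toFinset [Fintype V] [DecidableEq V] (hM : IsMatching G M)
    {β : Type*} [AddCommMonoid β] (f : V → β) :
    ∑ e ∈ M, ∑ v ∈ e.toFinset, f v = ∑ v ∈ univ.filter (fun v => ¬ IsFreeVtx M v), f v := by
  rw [← sum_biUnion hM.pairwiseDisjoint_toFinset]
  congr 1
  ext v
  simp [IsFreeVtx]

end IsMatching

lemma yzval_eq_of_not_isDiag [DecidableEq V] (y : V → ℝ) (Ω : Finset (Finset V))
    (z : Finset V → ℝ) {e : Sym2 V} (he : ¬ e.IsDiag) :
    yzval y Ω z e = ∑ v ∈ e.toFinset, y v + ∑ B ∈ Ω, if e ∈ B.sym2 then z B else 0 := by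
  induction e using Sym2.ind with
  | h u v =>
    rw [Sym2.mk_isDiag_iff] at he
    simp only [yzval, Sym2.lift_mk, Sym2.toFinset_mk_eq, sum_pair he, mk_mem_sym2_iff]
    -- the two sides differ only in their `Decidable` instances
    congr!

theorem mwm_matched_yz_sum_general
    [Fintype V] [DecidableEq V]
    (G : SimpleGraph V)
    (M : Finset (Sym2 V)) (hM : IsMatching G M)
    (y : V → ℝ)
    (Ω : Finset (Finset V))
    (z : Finset V → ℝ)
    (hfull : ∀ B ∈ Ω, 2 * (M.filter (fun e => ∀ v ∈ e, v ∈ B)).card + 1 = B.card) :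
    ∑ e ∈ M, yzval y Ω z e =
      (∑ u ∈ Finset.univ.filter (fun v : V => ¬ IsFreeVtx M v), y u)
        + ∑ B ∈ Ω, ((B.card : ℝ) - 1) / 2 * z B := by
  have hcard : ∀ B ∈ Ω, ((M.filter fun e => ∀ v ∈ e, v ∈ B).card : ℝ) = ((B.card : ℝ) - 1) / 2 :=
    fun B hB => by
      have := congrArg (Nat.cast : ℕ → ℝ) (hfull B hB)
      push_cast at this
      linarith
  calc ∑ e ∈ M, yzval y Ω z e
      = ∑ e ∈ M, (∑ v ∈ e.toFinset, y v + ∑ B ∈ Ω, if e ∈ B.sym2 then z B else 0) :=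
        sum_congr rfl fun e he => yzval_eq_of_not_isDiag y Ω z (hM.not_isDiag he)
    _ = (∑ u ∈ univ.filter (fun v : V => ¬ IsFreeVtx M v), y u)
          + ∑ B ∈ Ω, ((M.filter (· ∈ B.sym2)).card : ℝ) * z B := by
        rw [sum_add_distrib, hM.sum_sum_toFinset, sum_comm]
        simp only [← sum_filter, sum_const, nsmul_eq_mul]
    _ = _ := by
        simp only [mem_sym2_iff]
        congr 1
        exact sum_congr rfl fun B hB => by rw [hcard B hB]

/-- If every `B ∈ Ω` is full with respect to the matching `M`
(exactly `(|B|−1)/2` edges of `M` have both endpoints in `B`), then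
`∑_{e ∈ M} yz(e) = ∑_{u ∈ V∖F} y(u) + ∑_{B ∈ Ω} ((|B|−1)/2) · z(B)`,
where `F` is the set of `M`-free vertices. -/
theorem mwm_matched_yz_sum
    [Fintype V] [DecidableEq V]
    (G : SimpleGraph V)
    (M : Finset (Sym2 V)) (hM : IsMatching G M)
    (y : V → ℝ)
    (Ω : Finset (Finset V)) (hodd : ∀ B ∈ Ω, Odd B.card)
    (z : Finset V → ℝ)
    (hfull : ∀ B ∈ Ω, 2 * (M.filter (fun e => ∀ v ∈ e, v ∈ B)).card + 1 = B.card) :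
    ∑ e ∈ M, yzval y Ω z e =
      (∑ u ∈ Finset.univ.filter (fun v : V => ¬ IsFreeVtx M v), y u)
        + ∑ B ∈ Ω, ((B.card : ℝ) - 1) / 2 * z B :=
  mwm_matched_yz_sum_general G M hM y Ω z hfull
end

section
/- Let H be a finite simple graph with a matching M, and let F be the set of M-free vertices. If V_in(F) ∩ V_out(F) = ∅, then H contains no M-augmenting path; equivalently, if H contains an M-augmenting path between two free vertices, then some vertex of H is reachable from F both by an even-length alternating path and by an odd-length alternating path. -/
open Finset
open scoped Classical

variable {V : Type*}

/-
Augmenting paths make their free endpoint both outer and inner: `g` is reached from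
itself by the trivial alternating path, and from `f` by the augmenting path, whose last
edge is unmatched (as `g` is free) and hence sits at an even position, so the path has odd length.
-/

namespace IsAlternating

variable {G : SimpleGraph V} {M : Finset (Sym2 V)}

lemma nil (v : V) : IsAlternating G M (SimpleGraph.Walk.nil : G.Walk v v) :=
  fun _ h => by simp at h

lemma odd_length_of_isFreeVtx {u v : V} {p : G.Walk u v} (halt : IsAlternating G M p)
    (hv : IsFreeVtx M v) (hp : ¬p.Nil) : Odd p.length := by
  have hne : p.edges ≠ [] := SimpleGraph.Walk.edges_eq_nil.not.mpr hp
  have hpos : 0 < p.edges.length := List.length_pos_iff.mpr hne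
  have hlast : v ∈ p.edges.getLast hne := by
    rw [SimpleGraph.Walk.getLast_edges_eq_mk_penultimate_end]
    exact Sym2.mem_mk_right _ _
  rw [List.getLast_eq_getElem] at hlast
  have hunmatched : p.edges.get ⟨p.edges.length - 1, by omega⟩ ∉ M :=
    fun hm => hv _ hm hlast
  have heven := (halt _ _).not.mp hunmatched
  rw [Nat.odd_iff, ← p.length_edges]
  omega

end IsAlternating

theorem mwm_augmenting_path_inner_outer_overlap_general
    (G : SimpleGraph V)
    (M : Finset (Sym2 V))
    (f g : V) (hf : IsFreeVtx M f) (hg : IsFreeVtx M g) (hfg : f ≠ g)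
    (p : G.Walk f g) (hp : p.IsPath) (halt : IsAlternating G M p) :
    ∃ (v f₁ f₂ : V) (q₁ : G.Walk f₁ v) (q₂ : G.Walk f₂ v),
      IsFreeVtx M f₁ ∧ IsFreeVtx M f₂ ∧
      q₁.IsPath ∧ q₂.IsPath ∧
      IsAlternating G M q₁ ∧ IsAlternating G M q₂ ∧
      Even q₁.length ∧ Odd q₂.length :=
  ⟨g, g, f, .nil, p, hg, hf, .nil, hp, .nil g, halt, .zero,
    halt.odd_length_of_isFreeVtx hg (SimpleGraph.Walk.not_nil_of_ne hfg)⟩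

/-- If a graph contains an `M`-augmenting path — a simple alternating path
(edges at even positions unmatched, at odd positions matched) between two distinct `M`-free
vertices — then some vertex is reachable from a free vertex both by an even-length and by an
odd-length alternating simple path; equivalently, if `V_in(F) ∩ V_out(F) = ∅` then there is
no `M`-augmenting path. -/
theorem mwm_augmenting_path_inner_outer_overlap
    [Fintype V] [DecidableEq V]
    (G : SimpleGraph V)
    (M : Finset (Sym2 V)) (hM : IsMatching G M)
    (f g : V) (hf : IsFreeVtx M f) (hg : IsFreeVtx M g) (hfg : f ≠ g)
    (p : G.Walk f g) (hp : p.IsPath) (halt : IsAlternating G M p) :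
    ∃ (v f₁ f₂ : V) (q₁ : G.Walk f₁ v) (q₂ : G.Walk f₂ v),
      IsFreeVtx M f₁ ∧ IsFreeVtx M f₂ ∧
      q₁.IsPath ∧ q₂.IsPath ∧
      IsAlternating G M q₁ ∧ IsAlternating G M q₂ ∧
      Even q₁.length ∧ Odd q₂.length :=
  mwm_augmenting_path_inner_outer_overlap_general G M f g hf hg hfg p hp halt
end

section
/- Let G = (V, E) be a finite simple graph with edge weights w : E → ℝ_{>0} and let 0 < ε₀ < 1. Let J ⊆ ℤ be a finite index set and for each j ∈ J let M_j be a matching of G, such that the edge sets M_j are pairwise disjoint and the following weight separation holds: for all j, j' ∈ J with j < j' and all e ∈ M_j, e' ∈ M_{j'}, one has w(e) ≤ ε₀^{j'−j} · w(e'). Let M ⊆ ∪_{j∈J} M_j be a matching such that every edge f ∈ (∪_{j∈J} M_j) ∖ M shares an endpoint with some edge e ∈ M satisfying w(e) ≥ w(f). Then Σ_{j∈J} w(M_j) ≤ (1 + 2ε₀/(1−ε₀)) · w(M). -/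
open Finset
open scoped Classical

variable {V : Type*}

/-! Charge every discarded edge `f` to a chosen edge `e` that blocks it. If `e ∈ M_j`, then
`f` lies on a strictly lower level `i < j`: on level `j` the matching `M_j` forbids a shared
endpoint, and on a higher level the separation would force `w e < w f`. On each lower level `i`
at most two edges of the matching `M_i` touch the endpoints of `e`, each of weight at most
`ε₀^(j-i) · w e`, so the geometric series bounds the weight charged to `e` by
`2ε₀/(1-ε₀) · w e`. -/

theorem sum_zpow_sub_le_div_one_sub {ε : ℝ} (hε0 : 0 ≤ ε) (hε1 : ε < 1) (K : Finset ℤ) (j : ℤ)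
    (hK : ∀ i ∈ K, i < j) : ∑ i ∈ K, ε ^ (j - i) ≤ ε / (1 - ε) := by
  have hinj : Set.InjOn (fun i => (j - i).toNat) K := fun a ha b hb hab => by
    have := hK a ha; have := hK b hb; simp only at hab; omega
  obtain ⟨N, hN⟩ : ∃ N : ℕ, ∀ i ∈ K, (j - i).toNat < N :=
    ⟨∑ i ∈ K, (j - i).toNat + 1, fun i hi =>
      Nat.lt_succ_of_le (single_le_sum (f := fun i => (j - i).toNat) (by simp) hi)⟩
  calc ∑ i ∈ K, ε ^ (j - i) = ∑ k ∈ K.image (fun i => (j - i).toNat), ε ^ k := by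
        rw [sum_image hinj]
        refine sum_congr rfl fun i hi => ?_
        rw [← zpow_natCast, Int.toNat_of_nonneg (by linarith [hK i hi])]
    _ ≤ ∑ k ∈ Ico 1 N, ε ^ k := by
        refine sum_le_sum_of_subset_of_nonneg ?_ fun _ _ _ => by positivity
        intro k hk
        obtain ⟨i, hi, rfl⟩ := mem_image.mp hk
        have := hK i hi; have := hN i hi
        rw [mem_Ico]; omega
    _ ≤ ε / (1 - ε) := by simpa using geom_sum_Ico_le_of_lt_one (m := 1) (n := N) hε0 hε1

namespace IsMatching

variable {G : SimpleGraph V} {M : Finset (Sym2 V)}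

theorem card_filter_mem_le_one (hM : IsMatching G M) (x : V) : #(M.filter (x ∈ ·)) ≤ 1 :=
  card_le_one.mpr fun a ha b hb => by
    by_contra hab
    exact hM.2 a (mem_filter.mp ha).1 b (mem_filter.mp hb).1 hab x
      (mem_filter.mp ha).2 (mem_filter.mp hb).2

theorem card_filter_meets_le_two (hM : IsMatching G M) (e : Sym2 V) :
    #(M.filter (fun f => ∃ v, v ∈ e ∧ v ∈ f)) ≤ 2 := by
  induction e using Sym2.ind with
  | _ u v =>
  have hsub : M.filter (fun f => ∃ x, x ∈ s(u, v) ∧ x ∈ f) ⊆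
      M.filter (u ∈ ·) ∪ M.filter (v ∈ ·) := by
    intro f hf
    obtain ⟨hfM, x, hx, hxf⟩ := mem_filter.mp hf
    rcases Sym2.mem_iff.mp hx with rfl | rfl <;> simp [hfM, hxf]
  calc _ ≤ #(M.filter (u ∈ ·) ∪ M.filter (v ∈ ·)) := card_le_card hsub
    _ ≤ 2 := (card_union_le _ _).trans
        (by linarith [hM.card_filter_mem_le_one u, hM.card_filter_mem_le_one v])

theorem sum_le_two_mul_of_meets (hM : IsMatching G M) (w : Sym2 V → ℝ) {e : Sym2 V}
    {S : Finset (Sym2 V)} (hSM : S ⊆ M) (hmeet : ∀ f ∈ S, ∃ v, v ∈ e ∧ v ∈ f) {c : ℝ}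
    (hc0 : 0 ≤ c) (hc : ∀ f ∈ S, w f ≤ c) : ∑ f ∈ S, w f ≤ 2 * c := by
  have hcard : #S ≤ 2 := (card_le_card fun f hf => mem_filter.mpr ⟨hSM hf, hmeet f hf⟩).trans
    (hM.card_filter_meets_le_two e)
  calc ∑ f ∈ S, w f ≤ #S • c := sum_le_card_nsmul S w c hc
    _ ≤ 2 * c := by rw [nsmul_eq_mul]; gcongr; exact_mod_cast hcard

end IsMatching

theorem sum_le_sum_sum_filter_of_covered {ι κ : Type*} (D : Finset ι) (M : Finset κ)
    (R : κ → ι → Prop) (w : ι → ℝ) (hw : ∀ f ∈ D, 0 ≤ w f) (hcov : ∀ f ∈ D, ∃ e ∈ M, R e f) :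
    ∑ f ∈ D, w f ≤ ∑ e ∈ M, ∑ f ∈ D.filter (R e), w f := by
  simp only [sum_filter]
  rw [sum_comm]
  refine sum_le_sum fun f hf => ?_
  obtain ⟨e, he, hRe⟩ := hcov f hf
  calc w f = if R e f then w f else 0 := (if_pos hRe).symm
    _ ≤ ∑ e ∈ M, if R e f then w f else 0 :=
      single_le_sum (f := fun e => if R e f then w f else 0)
        (fun _ _ => by split_ifs <;> simp [hw f hf]) he

/-- `e` blocks `f` in the greedy algorithm: once `e` is chosen, `f` is discarded. -/
def Blocks (w : Sym2 V → ℝ) (e f : Sym2 V) : Prop := f ≠ e ∧ w f ≤ w e ∧ ∃ v, v ∈ e ∧ v ∈ f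

def IsWeightSeparated (w : Sym2 V → ℝ) (ε : ℝ) (J : Finset ℤ) (Mfam : ℤ → Finset (Sym2 V)) :
    Prop :=
  ∀ j ∈ J, ∀ j' ∈ J, j < j' → ∀ e ∈ Mfam j, ∀ e' ∈ Mfam j', w e ≤ ε ^ (j' - j) * w e'

section Charging

variable {G : SimpleGraph V} {w : Sym2 V → ℝ} {ε : ℝ} {J : Finset ℤ} {Mfam : ℤ → Finset (Sym2 V)}

theorem IsWeightSeparated.lt_of_blocks (hsep : IsWeightSeparated w ε J Mfam) (hε0 : 0 < ε)
    (hε1 : ε < 1) {i j : ℤ} (hi : i ∈ J) (hj : j ∈ J) (hMj : IsMatching G (Mfam j))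
    {e f : Sym2 V} (he : e ∈ Mfam j) (hf : f ∈ Mfam i) (hwf : 0 < w f) (hb : Blocks w e f) :
    i < j := by
  obtain ⟨hfe, hwfe, v, hve, hvf⟩ := hb
  rcases lt_trichotomy i j with hij | rfl | hji
  · exact hij
  · exact absurd hvf (hMj.2 e he f hf (Ne.symm hfe) v hve)
  · have hpow : ε ^ (i - j) < 1 := zpow_lt_one₀ hε0 hε1 (by omega)
    have := hsep j hj i hi hji e he f hf
    nlinarith

theorem IsWeightSeparated.sum_filter_blocks_le [DecidableEq V]
    (hsep : IsWeightSeparated w ε J Mfam) (hε0 : 0 < ε) (hε1 : ε < 1)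
    (hmatch : ∀ j ∈ J, IsMatching G (Mfam j))
    (hdisj : (J : Set ℤ).PairwiseDisjoint Mfam) (hpos : ∀ j ∈ J, ∀ f ∈ Mfam j, 0 < w f)
    {j : ℤ} (hj : j ∈ J) {e : Sym2 V} (he : e ∈ Mfam j) :
    ∑ f ∈ (J.biUnion Mfam).filter (Blocks w e), w f ≤ 2 * ε / (1 - ε) * w e := by
  have hlevel : ∀ i ∈ J, ∑ f ∈ (Mfam i).filter (Blocks w e), w f ≤
      if i < j then 2 * (ε ^ (j - i) * w e) else 0 := by
    intro i hi
    split_ifs with hij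
    · refine (hmatch i hi).sum_le_two_mul_of_meets w (filter_subset _ _)
        (fun f hf => (mem_filter.mp hf).2.2.2) (by positivity [(hpos j hj e he).le]) ?_
      exact fun f hf => hsep i hi j hj hij f (mem_filter.mp hf).1 e he
    · refine (sum_eq_zero fun f hf => absurd ?_ hij).le
      obtain ⟨hfi, hb⟩ := mem_filter.mp hf
      exact hsep.lt_of_blocks hε0 hε1 hi hj (hmatch j hj) he hfi (hpos i hi f hfi) hb
  rw [filter_biUnion, sum_biUnion (hdisj.mono fun i => filter_subset _ _)]
  calc _ ≤ ∑ i ∈ J, if i < j then 2 * (ε ^ (j - i) * w e) else 0 := sum_le_sum hlevel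
    _ = 2 * w e * ∑ i ∈ J.filter (· < j), ε ^ (j - i) := by
        rw [← sum_filter, mul_sum]
        exact sum_congr rfl fun _ _ => by ring
    _ ≤ 2 * w e * (ε / (1 - ε)) := by
        gcongr
        · linarith [hpos j hj e he]
        · exact sum_zpow_sub_le_div_one_sub hε0.le hε1 _ j fun i hi => (mem_filter.mp hi).2
    _ = 2 * ε / (1 - ε) * w e := by ring

end Charging

theorem mwm_greedy_merge_charging_general
    [Fintype V] [DecidableEq V]
    (G : SimpleGraph V) [DecidableRel G.Adj]
    (w : Sym2 V → ℝ) (hw : ∀ e ∈ G.edgeFinset, 0 < w e)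
    (ε₀ : ℝ) (hε0 : 0 < ε₀) (hε1 : ε₀ < 1)
    (J : Finset ℤ) (Mfam : ℤ → Finset (Sym2 V))
    (hmatch : ∀ j ∈ J, IsMatching G (Mfam j))
    (hdisj : ∀ j ∈ J, ∀ j' ∈ J, j ≠ j' → Disjoint (Mfam j) (Mfam j'))
    (hsep : ∀ j ∈ J, ∀ j' ∈ J, j < j' → ∀ e ∈ Mfam j, ∀ e' ∈ Mfam j',
      w e ≤ ε₀ ^ (j' - j) * w e')
    (M : Finset (Sym2 V))
    (hMsub : M ⊆ J.biUnion Mfam)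
    (hgreedy : ∀ f ∈ J.biUnion Mfam, f ∉ M →
      ∃ e ∈ M, w f ≤ w e ∧ ∃ v : V, v ∈ e ∧ v ∈ f) :
    ∑ j ∈ J, mWeight w (Mfam j) ≤ (1 + 2 * ε₀ / (1 - ε₀)) * mWeight w M := by
  set T := J.biUnion Mfam
  have hpos : ∀ j ∈ J, ∀ f ∈ Mfam j, 0 < w f := fun j hj f hf =>
    hw f (SimpleGraph.mem_edgeFinset.mpr ((hmatch j hj).1 hf))
  have hT0 : ∀ f ∈ T, 0 ≤ w f := fun f hf => by
    obtain ⟨j, hj, hfj⟩ := mem_biUnion.mp hf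
    exact (hpos j hj f hfj).le
  have hcharge : ∀ e ∈ M, ∑ f ∈ (T \ M).filter (Blocks w e), w f ≤ 2 * ε₀ / (1 - ε₀) * w e :=
    fun e he => by
      obtain ⟨j, hj, hej⟩ := mem_biUnion.mp (hMsub he)
      refine (sum_le_sum_of_subset_of_nonneg (filter_subset_filter _ sdiff_subset)
        fun f hf _ => hT0 f (mem_filter.mp hf).1).trans ?_
      exact IsWeightSeparated.sum_filter_blocks_le hsep hε0 hε1 hmatch hdisj hpos hj hej
  have hcover : ∀ f ∈ T \ M, ∃ e ∈ M, Blocks w e f := fun f hf => by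
    obtain ⟨hfT, hfM⟩ := mem_sdiff.mp hf
    obtain ⟨e, he, hwfe, hmeet⟩ := hgreedy f hfT hfM
    exact ⟨e, he, fun hfe => hfM (hfe ▸ he), hwfe, hmeet⟩
  have hdiscarded : ∑ f ∈ T \ M, w f ≤ 2 * ε₀ / (1 - ε₀) * mWeight w M :=
    (sum_le_sum_sum_filter_of_covered _ _ _ w (fun f hf => hT0 f (sdiff_subset hf)) hcover).trans
      ((sum_le_sum hcharge).trans_eq (mul_sum _ _ _).symm)
  calc ∑ j ∈ J, mWeight w (Mfam j) = ∑ f ∈ T, w f := (sum_biUnion hdisj).symm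
    _ = mWeight w M + ∑ f ∈ T \ M, w f := by rw [← sum_sdiff hMsub, add_comm]; rfl
    _ ≤ (1 + 2 * ε₀ / (1 - ε₀)) * mWeight w M := by linarith

/-- Greedy merge charging: given pairwise-disjoint matchings `M_j` (`j ∈ J`)
with geometric weight separation (`w(e) ≤ ε₀^{j'−j}·w(e')` for `e ∈ M_j`, `e' ∈ M_{j'}`,
`j < j'`), and a matching `M ⊆ ∪_j M_j` in which every discarded edge shares an endpoint
with a chosen edge of no smaller weight, one has
`∑_{j ∈ J} w(M_j) ≤ (1 + 2ε₀/(1−ε₀)) · w(M)`. -/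
theorem mwm_greedy_merge_charging
    [Fintype V] [DecidableEq V]
    (G : SimpleGraph V) [DecidableRel G.Adj]
    (w : Sym2 V → ℝ) (hw : ∀ e ∈ G.edgeFinset, 0 < w e)
    (ε₀ : ℝ) (hε0 : 0 < ε₀) (hε1 : ε₀ < 1)
    (J : Finset ℤ) (Mfam : ℤ → Finset (Sym2 V))
    (hmatch : ∀ j ∈ J, IsMatching G (Mfam j))
    (hdisj : ∀ j ∈ J, ∀ j' ∈ J, j ≠ j' → Disjoint (Mfam j) (Mfam j'))
    (hsep : ∀ j ∈ J, ∀ j' ∈ J, j < j' → ∀ e ∈ Mfam j, ∀ e' ∈ Mfam j',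
      w e ≤ ε₀ ^ (j' - j) * w e')
    (M : Finset (Sym2 V)) (hM : IsMatching G M)
    (hMsub : M ⊆ J.biUnion Mfam)
    (hgreedy : ∀ f ∈ J.biUnion Mfam, f ∉ M →
      ∃ e ∈ M, w f ≤ w e ∧ ∃ v : V, v ∈ e ∧ v ∈ f) :
    ∑ j ∈ J, mWeight w (Mfam j) ≤ (1 + 2 * ε₀ / (1 - ε₀)) * mWeight w M :=
  mwm_greedy_merge_charging_general G w hw ε₀ hε0 hε1 J Mfam hmatch hdisj hsep M hMsub hgreedy
end

section
/- Let G = (V, E) be a finite simple graph with edge weights w : E → ℝ_{>0} and let 0 < ε₀ < 1. Let E' ⊆ E be partitioned into levels E' = ⨆_{j∈J} E'_j indexed by a finite set J ⊆ ℤ, with the weight separation property: for all j, j' ∈ J with j < j' and all e ∈ E'_j, e' ∈ E'_{j'}, one has w(e) ≤ ε₀^{j'−j} · w(e'). For each j ∈ J let M_j ⊆ E'_j be a matching with w(M_j) ≥ (1−ε₀) · w(N) for every matching N ⊆ E'_j. Let M ⊆ ∪_{j∈J} M_j be a matching such that every edge f ∈ (∪_{j∈J} M_j) ∖ M shares an endpoint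 with some edge e ∈ M satisfying w(e) ≥ w(f). Then for every matching N ⊆ E', w(M) ≥ (1 − 4ε₀) · w(N). -/
open Finset
open scoped Classical

variable {V : Type*}

private lemma sum_biUnion_le_real {α β : Type*} [DecidableEq β] (s : Finset α)
    (t : α → Finset β) (f : β → ℝ) (hf : ∀ b ∈ s.biUnion t, 0 ≤ f b) :
    ∑ b ∈ s.biUnion t, f b ≤ ∑ a ∈ s, ∑ b ∈ t a, f b := by
  induction s using Finset.induction_on with
  | empty => simp
  | @insert a s ha ih =>
    rw [Finset.biUnion_insert, Finset.sum_insert ha]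
    have hf' : ∀ b ∈ s.biUnion t, 0 ≤ f b := fun b hb =>
      hf b (by rw [Finset.biUnion_insert]; exact Finset.mem_union_right _ hb)
    have h2 := Finset.sum_union_inter (s₁ := t a) (s₂ := s.biUnion t) (f := f)
    have h3 : 0 ≤ ∑ b ∈ t a ∩ s.biUnion t, f b := by
      apply Finset.sum_nonneg
      intro b hb
      exact hf b (by
        rw [Finset.biUnion_insert]
        exact Finset.mem_union_left _ (Finset.mem_of_mem_inter_left hb))
    have h4 := ih hf'
    linarith

private lemma geom_tail_sum_le {ε : ℝ} (h0 : 0 < ε) (h1 : ε < 1) (S : Finset ℕ)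
    (hS : ∀ k ∈ S, 1 ≤ k) : ∑ k ∈ S, ε ^ k ≤ ε / (1 - ε) := by
  set n := S.sup id + 1 with hn
  have hsub : S ⊆ Finset.Ico 1 n := fun k hk =>
    Finset.mem_Ico.mpr ⟨hS k hk, Nat.lt_succ_of_le (Finset.le_sup (f := id) hk)⟩
  have h2 : ∑ k ∈ S, ε ^ k ≤ ∑ k ∈ Finset.Ico 1 n, ε ^ k :=
    Finset.sum_le_sum_of_subset_of_nonneg hsub (fun k _ _ => by positivity)
  have h3 : ∑ k ∈ Finset.Ico 1 n, ε ^ k = (ε ^ n - ε ^ 1) / (ε - 1) :=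
    geom_sum_Ico (by linarith) (by omega)
  have h4 : (ε ^ n - ε ^ 1) / (ε - 1) = (ε - ε ^ n) / (1 - ε) := by
    rw [div_eq_div_iff (by linarith) (by linarith)]; ring
  have h5 : (ε - ε ^ n) / (1 - ε) ≤ ε / (1 - ε) := by
    have hp : (0:ℝ) ≤ ε ^ n := by positivity
    rw [div_le_div_iff₀ (by linarith) (by linarith)]
    nlinarith
  linarith [h2, h3.le, h4.le, h5]

/-- Per-subgraph step of the Gupta–Peng reduction: if `E' = ⊔_{j∈J} E'_j`
is a level partition of a set of edges with geometric weight separation across levels,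
`M_j ⊆ E'_j` is a `(1−ε₀)`-approximate maximum weight matching of each level, and `M` is a
greedy merge of `∪_j M_j` (every discarded edge is blocked by a chosen edge of no smaller
weight), then `w(M) ≥ (1 − 4ε₀) · w(N)` for every matching `N ⊆ E'`. -/
theorem mwm_level_partition_approx
    [Fintype V] [DecidableEq V]
    (G : SimpleGraph V) [DecidableRel G.Adj]
    (w : Sym2 V → ℝ) (hw : ∀ e ∈ G.edgeFinset, 0 < w e)
    (ε₀ : ℝ) (hε0 : 0 < ε₀) (hε1 : ε₀ < 1)
    (J : Finset ℤ) (Efam : ℤ → Finset (Sym2 V))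
    (hEsub : ∀ j ∈ J, Efam j ⊆ G.edgeFinset)
    (hEdisj : ∀ j ∈ J, ∀ j' ∈ J, j ≠ j' → Disjoint (Efam j) (Efam j'))
    (hsep : ∀ j ∈ J, ∀ j' ∈ J, j < j' → ∀ e ∈ Efam j, ∀ e' ∈ Efam j',
      w e ≤ ε₀ ^ (j' - j) * w e')
    (Mfam : ℤ → Finset (Sym2 V))
    (hMfam : ∀ j ∈ J, IsMatching G (Mfam j) ∧ Mfam j ⊆ Efam j)
    (hMapprox : ∀ j ∈ J, ∀ N : Finset (Sym2 V), IsMatching G N → N ⊆ Efam j →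
      (1 - ε₀) * mWeight w N ≤ mWeight w (Mfam j))
    (M : Finset (Sym2 V)) (hM : IsMatching G M)
    (hMsub : M ⊆ J.biUnion Mfam)
    (hgreedy : ∀ f ∈ J.biUnion Mfam, f ∉ M →
      ∃ e ∈ M, w f ≤ w e ∧ ∃ v : V, v ∈ e ∧ v ∈ f)
    (N : Finset (Sym2 V)) (hN : IsMatching G N) (hNsub : N ⊆ J.biUnion Efam) :
    (1 - 4 * ε₀) * mWeight w N ≤ mWeight w M := by
  classical
  set U := J.biUnion Mfam with hU
  have hUedge : ∀ f ∈ U, f ∈ G.edgeFinset := by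
    intro f hf
    obtain ⟨j, hj, hfj⟩ := Finset.mem_biUnion.mp hf
    exact hEsub j hj ((hMfam j hj).2 hfj)
  have hNedge : ∀ f ∈ N, f ∈ G.edgeFinset := by
    intro f hf
    obtain ⟨j, hj, hfj⟩ := Finset.mem_biUnion.mp (hNsub hf)
    exact hEsub j hj hfj
  have hMedge : ∀ f ∈ M, f ∈ G.edgeFinset := fun f hf => hUedge f (hMsub hf)
  have hwM : 0 ≤ mWeight w M := Finset.sum_nonneg fun e he => (hw e (hMedge e he)).le
  have hwN : 0 ≤ mWeight w N := Finset.sum_nonneg fun e he => (hw e (hNedge e he)).le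
  have hNeq : N = J.biUnion (fun j => N ∩ Efam j) := by
    ext f
    simp only [Finset.mem_biUnion, Finset.mem_inter]
    constructor
    · intro hf
      obtain ⟨j, hj, hfj⟩ := Finset.mem_biUnion.mp (hNsub hf)
      exact ⟨j, hj, hf, hfj⟩
    · rintro ⟨j, hj, hf, _⟩; exact hf
  have hNdisj : (J : Set ℤ).PairwiseDisjoint (fun j => N ∩ Efam j) := by
    intro j hj j' hj' hne
    exact (hEdisj j hj j' hj' hne).mono Finset.inter_subset_right Finset.inter_subset_right
  have hMdisj : (J : Set ℤ).PairwiseDisjoint Mfam := by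
    intro j hj j' hj' hne
    exact (hEdisj j hj j' hj' hne).mono (hMfam j hj).2 (hMfam j' hj').2
  have step2 : (1 - ε₀) * mWeight w N ≤ mWeight w U := by
    have h1 : mWeight w N = ∑ j ∈ J, mWeight w (N ∩ Efam j) := by
      simp only [mWeight]
      conv_lhs => rw [hNeq]
      exact Finset.sum_biUnion hNdisj
    have h2 : mWeight w U = ∑ j ∈ J, mWeight w (Mfam j) := by
      simp only [mWeight]
      exact Finset.sum_biUnion hMdisj
    rw [h1, h2, Finset.mul_sum]
    apply Finset.sum_le_sum
    intro j hj
    apply hMapprox j hj _ _ Finset.inter_subset_right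
    constructor
    · intro x hx
      exact hN.1 (Finset.mem_coe.mpr
        (Finset.mem_of_mem_inter_left (Finset.mem_coe.mp hx)))
    · intro e he f hf hne x hx
      exact hN.2 e (Finset.mem_of_mem_inter_left he) f
        (Finset.mem_of_mem_inter_left hf) hne x hx
  set T : Sym2 V → Finset (Sym2 V) :=
    fun e => (U \ M).filter (fun f => w f ≤ w e ∧ ∃ x : V, x ∈ e ∧ x ∈ f) with hT
  have key : ∀ u v : V, s(u, v) ∈ M →
      ∑ f ∈ T s(u, v), w f ≤ (2 * ε₀ / (1 - ε₀)) * w s(u, v) := by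
    intro u v he
    obtain ⟨j1, hj1J, hej1⟩ := Finset.mem_biUnion.mp (hMsub he)
    have heE : s(u, v) ∈ Efam j1 := (hMfam j1 hj1J).2 hej1
    have hwe : 0 < w s(u, v) := hw _ (hEsub j1 hj1J heE)
    set B := (J.filter (fun j => j < j1)).biUnion
      (fun j => (Mfam j).filter (fun f => u ∈ f ∨ v ∈ f)) with hB
    have hTB : T s(u, v) ⊆ B := by
      intro f hf
      simp only [hT, Finset.mem_filter, Finset.mem_sdiff] at hf
      obtain ⟨⟨hfU, hfM⟩, hwf, x, hxe, hxf⟩ := hf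
      obtain ⟨j, hjJ, hfj⟩ := Finset.mem_biUnion.mp hfU
      have hfE : f ∈ Efam j := (hMfam j hjJ).2 hfj
      have hwfpos : 0 < w f := hw f (hEsub j hjJ hfE)
      have hne : s(u, v) ≠ f := fun h => hfM (h ▸ he)
      have hjlt : j < j1 := by
        rcases lt_trichotomy j j1 with h | h | h
        · exact h
        · exfalso
          subst h
          exact (hMfam j hjJ).1.2 _ hej1 f hfj hne x hxe hxf
        · exfalso
          have h1 := hsep j1 hj1J j hjJ h _ heE f hfE
          have h2 : ε₀ ^ (j - j1) ≤ ε₀ := by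
            have h3 : ε₀ ^ (j - j1) = ε₀ ^ ((j - j1).toNat) := by
              rw [← zpow_natCast, Int.toNat_of_nonneg (by omega)]
            rw [h3]
            calc ε₀ ^ (j - j1).toNat ≤ ε₀ ^ 1 :=
                  pow_le_pow_of_le_one hε0.le hε1.le (by omega)
              _ = ε₀ := pow_one ε₀
          nlinarith [mul_le_mul_of_nonneg_right h2 hwfpos.le]
      refine Finset.mem_biUnion.mpr ⟨j, Finset.mem_filter.mpr ⟨hjJ, hjlt⟩,
        Finset.mem_filter.mpr ⟨hfj, ?_⟩⟩
      rcases Sym2.mem_iff.mp hxe with rfl | rfl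
      · exact Or.inl hxf
      · exact Or.inr hxf
    have hBedge : ∀ f ∈ B, 0 ≤ w f := by
      intro f hf
      obtain ⟨j, hj, hfj⟩ := Finset.mem_biUnion.mp hf
      have hjJ := (Finset.mem_filter.mp hj).1
      exact (hw f (hEsub j hjJ ((hMfam j hjJ).2 (Finset.mem_filter.mp hfj).1))).le
    have hsum1 : ∑ f ∈ T s(u, v), w f ≤ ∑ f ∈ B, w f :=
      Finset.sum_le_sum_of_subset_of_nonneg hTB (fun f hf _ => hBedge f hf)
    have hsum2 : ∑ f ∈ B, w f ≤ ∑ j ∈ J.filter (fun j => j < j1),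
        ∑ f ∈ (Mfam j).filter (fun f => u ∈ f ∨ v ∈ f), w f :=
      sum_biUnion_le_real _ _ _ hBedge
    have hfiber : ∀ j ∈ J.filter (fun j => j < j1),
        ∑ f ∈ (Mfam j).filter (fun f => u ∈ f ∨ v ∈ f), w f
          ≤ 2 * (ε₀ ^ (j1 - j) * w s(u, v)) := by
      intro j hj
      obtain ⟨hjJ, hjlt⟩ := Finset.mem_filter.mp hj
      have hbound : ∀ x : V, ∑ f ∈ (Mfam j).filter (fun f => x ∈ f), w f
          ≤ ε₀ ^ (j1 - j) * w s(u, v) := by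
        intro x
        have hpos : 0 < ε₀ ^ (j1 - j) * w s(u, v) :=
          mul_pos (zpow_pos hε0 _) hwe
        rcases Finset.eq_empty_or_nonempty ((Mfam j).filter (fun f => x ∈ f))
          with h | ⟨a, ha⟩
        · rw [h]; simpa using hpos.le
        · have haM := (Finset.mem_filter.mp ha).1
          have hxa := (Finset.mem_filter.mp ha).2
          have haE : a ∈ Efam j := (hMfam j hjJ).2 haM
          have hsub : (Mfam j).filter (fun f => x ∈ f) ⊆ {a} := by
            intro b hb
            obtain ⟨hbM, hxb⟩ := Finset.mem_filter.mp hb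
            rw [Finset.mem_singleton]
            by_contra hne
            exact (hMfam j hjJ).1.2 b hbM a haM hne x hxb hxa
          calc ∑ f ∈ (Mfam j).filter (fun f => x ∈ f), w f
              ≤ ∑ f ∈ ({a} : Finset (Sym2 V)), w f := by
                apply Finset.sum_le_sum_of_subset_of_nonneg hsub
                intro f hf _
                rw [Finset.mem_singleton] at hf
                rw [hf]
                exact (hw a (hEsub j hjJ haE)).le
            _ = w a := Finset.sum_singleton _ _
            _ ≤ ε₀ ^ (j1 - j) * w s(u, v) := hsep j hjJ j1 hj1J hjlt a haE _ heE
      have hnn : ∀ f ∈ (Mfam j).filter (fun f => u ∈ f)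
          ∪ (Mfam j).filter (fun f => v ∈ f), 0 ≤ w f := by
        intro f hf
        have hfM : f ∈ Mfam j := by
          rcases Finset.mem_union.mp hf with h | h
          exacts [(Finset.mem_filter.mp h).1, (Finset.mem_filter.mp h).1]
        exact (hw f (hEsub j hjJ ((hMfam j hjJ).2 hfM))).le
      have hsplit : (Mfam j).filter (fun f => u ∈ f ∨ v ∈ f)
          ⊆ (Mfam j).filter (fun f => u ∈ f) ∪ (Mfam j).filter (fun f => v ∈ f) := by
        intro f hf
        obtain ⟨hfM, h⟩ := Finset.mem_filter.mp hf
        rcases h with h | h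
        · exact Finset.mem_union_left _ (Finset.mem_filter.mpr ⟨hfM, h⟩)
        · exact Finset.mem_union_right _ (Finset.mem_filter.mpr ⟨hfM, h⟩)
      have hcup : ∑ f ∈ (Mfam j).filter (fun f => u ∈ f)
            ∪ (Mfam j).filter (fun f => v ∈ f), w f
          ≤ (∑ f ∈ (Mfam j).filter (fun f => u ∈ f), w f)
            + ∑ f ∈ (Mfam j).filter (fun f => v ∈ f), w f := by
        have h := Finset.sum_union_inter (s₁ := (Mfam j).filter (fun f => u ∈ f))
          (s₂ := (Mfam j).filter (fun f => v ∈ f)) (f := w)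
        have h2 : 0 ≤ ∑ f ∈ (Mfam j).filter (fun f => u ∈ f)
            ∩ (Mfam j).filter (fun f => v ∈ f), w f :=
          Finset.sum_nonneg (fun f hf => hnn f
            (Finset.mem_union_left _ (Finset.mem_of_mem_inter_left hf)))
        linarith
      calc ∑ f ∈ (Mfam j).filter (fun f => u ∈ f ∨ v ∈ f), w f
          ≤ ∑ f ∈ (Mfam j).filter (fun f => u ∈ f)
              ∪ (Mfam j).filter (fun f => v ∈ f), w f :=
            Finset.sum_le_sum_of_subset_of_nonneg hsplit (fun i hi _ => hnn i hi)
        _ ≤ (∑ f ∈ (Mfam j).filter (fun f => u ∈ f), w f)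
              + ∑ f ∈ (Mfam j).filter (fun f => v ∈ f), w f := hcup
        _ ≤ 2 * (ε₀ ^ (j1 - j) * w s(u, v)) := by linarith [hbound u, hbound v]
    have hgeo : ∑ j ∈ J.filter (fun j => j < j1), ε₀ ^ (j1 - j) ≤ ε₀ / (1 - ε₀) := by
      have h1 : ∀ j ∈ J.filter (fun j => j < j1),
          ε₀ ^ (j1 - j) = ε₀ ^ ((j1 - j).toNat) := by
        intro j hj
        have := (Finset.mem_filter.mp hj).2
        rw [← zpow_natCast, Int.toNat_of_nonneg (by omega)]
      rw [Finset.sum_congr rfl h1]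
      have hinj : ∀ x ∈ J.filter (fun j => j < j1), ∀ y ∈ J.filter (fun j => j < j1),
          (j1 - x).toNat = (j1 - y).toNat → x = y := by
        intro x hx y hy h
        have hx' := (Finset.mem_filter.mp hx).2
        have hy' := (Finset.mem_filter.mp hy).2
        omega
      rw [← Finset.sum_image hinj]
      apply geom_tail_sum_le hε0 hε1
      intro k hk
      obtain ⟨j, hj, rfl⟩ := Finset.mem_image.mp hk
      have := (Finset.mem_filter.mp hj).2
      omega
    calc ∑ f ∈ T s(u, v), w f
        ≤ ∑ j ∈ J.filter (fun j => j < j1),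
            ∑ f ∈ (Mfam j).filter (fun f => u ∈ f ∨ v ∈ f), w f := hsum1.trans hsum2
      _ ≤ ∑ j ∈ J.filter (fun j => j < j1), 2 * (ε₀ ^ (j1 - j) * w s(u, v)) :=
          Finset.sum_le_sum hfiber
      _ = 2 * w s(u, v) * ∑ j ∈ J.filter (fun j => j < j1), ε₀ ^ (j1 - j) := by
          rw [Finset.mul_sum]
          apply Finset.sum_congr rfl
          intros
          ring
      _ ≤ 2 * w s(u, v) * (ε₀ / (1 - ε₀)) := by
          apply mul_le_mul_of_nonneg_left hgeo (by linarith)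
      _ = (2 * ε₀ / (1 - ε₀)) * w s(u, v) := by ring
  have key' : ∀ e ∈ M, ∑ f ∈ T e, w f ≤ (2 * ε₀ / (1 - ε₀)) * w e := by
    intro e
    induction e using Sym2.ind with
    | _ u v => exact key u v
  have hcover : U \ M ⊆ M.biUnion T := by
    intro f hf
    obtain ⟨hfU, hfM⟩ := Finset.mem_sdiff.mp hf
    obtain ⟨e, he, hwf, x, hxe, hxf⟩ := hgreedy f hfU hfM
    exact Finset.mem_biUnion.mpr ⟨e, he, Finset.mem_filter.mpr ⟨hf, hwf, x, hxe, hxf⟩⟩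
  have hnnUM : ∀ f ∈ M.biUnion T, 0 ≤ w f := by
    intro f hf
    obtain ⟨e, _, hfe⟩ := Finset.mem_biUnion.mp hf
    have h1 : f ∈ U \ M := (Finset.mem_filter.mp hfe).1
    exact (hw f (hUedge f (Finset.mem_sdiff.mp h1).1)).le
  have step4 : ∑ f ∈ U \ M, w f ≤ (2 * ε₀ / (1 - ε₀)) * mWeight w M := by
    calc ∑ f ∈ U \ M, w f ≤ ∑ f ∈ M.biUnion T, w f :=
          Finset.sum_le_sum_of_subset_of_nonneg hcover (fun i hi _ => hnnUM i hi)
      _ ≤ ∑ e ∈ M, ∑ f ∈ T e, w f := sum_biUnion_le_real _ _ _ hnnUM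
      _ ≤ ∑ e ∈ M, (2 * ε₀ / (1 - ε₀)) * w e := Finset.sum_le_sum key'
      _ = (2 * ε₀ / (1 - ε₀)) * mWeight w M := by rw [mWeight, Finset.mul_sum]
  have step3 : mWeight w U = (∑ f ∈ U \ M, w f) + mWeight w M :=
    (Finset.sum_sdiff hMsub).symm
  have hUM : (1 - ε₀) * mWeight w U ≤ (1 + ε₀) * mWeight w M := by
    have h1 : mWeight w U ≤ (2 * ε₀ / (1 - ε₀)) * mWeight w M + mWeight w M := by
      rw [step3]; linarith [step4]
    have h2 : (0:ℝ) < 1 - ε₀ := by linarith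
    have h3 : (1 - ε₀) * ((2 * ε₀ / (1 - ε₀)) * mWeight w M) = 2 * ε₀ * mWeight w M := by
      field_simp
    nlinarith [mul_le_mul_of_nonneg_left h1 h2.le]
  have hchain : (1 - ε₀) * ((1 - ε₀) * mWeight w N) ≤ (1 + ε₀) * mWeight w M :=
    le_trans (mul_le_mul_of_nonneg_left step2 (by linarith)) hUM
  nlinarith [hchain, hwN, hwM, mul_nonneg hwN hε0.le,
    mul_nonneg (mul_nonneg hwN hε0.le) hε0.le]
end

section
/- Let G = (V, E) be a finite simple graph with edge weights w : E → ℝ satisfying w(e) ≥ 1 for all e ∈ E, let 0 < ε₀ < 1/5, and let k = ⌈1/ε₀⌉. For an edge e define its bucket number b(e) = ⌊log_{1/ε₀} w(e)⌋ ∈ ℕ, and for each i ∈ {0, 1, …, k−1} define E_i = {e ∈ E : b(e) mod k ≠ i}. Suppose that for each i ∈ {0, 1, …, k−1}, M_i is a matching with M_i ⊆ E_i and w(M_i) ≥ (1 − 4ε₀) · w(N) for every matching N ⊆ E_i. Then for every matching N of G, max_{0 ≤ i < k} w(M_i) ≥ (1 − 5ε₀) · w(N); in particular, the heaviest of the matchings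 M_0, …, M_{k−1} is a (1 − 5ε₀)-approximate maximum w-weight matching of G. -/
open Finset
open scoped Classical

variable {V : Type*}

/-- Combination step of the Gupta–Peng reduction: with bucket numbers
`b(e) = ⌊log_{1/ε₀} w(e)⌋`, `k = ⌈1/ε₀⌉`, and subgraphs
`E_i = {e ∈ E : b(e) mod k ≠ i}`, if each `M_i ⊆ E_i` is a `(1−4ε₀)`-approximate maximum
weight matching of `E_i`, then the heaviest `M_i` is a `(1−5ε₀)`-approximate maximum weight
matching of `G`: for every matching `N` of `G` there is `i < k` with
`w(M_i) ≥ (1 − 5ε₀)·w(N)`. -/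
theorem mwm_gupta_peng_combination
    [Fintype V] [DecidableEq V]
    (G : SimpleGraph V) [DecidableRel G.Adj]
    (w : Sym2 V → ℝ) (hw : ∀ e ∈ G.edgeFinset, 1 ≤ w e)
    (ε₀ : ℝ) (hε0 : 0 < ε₀) (hε1 : ε₀ < 1 / 5)
    (k : ℕ) (hk : k = ⌈1 / ε₀⌉₊)
    (b : Sym2 V → ℕ) (hb : ∀ e ∈ G.edgeFinset, b e = ⌊Real.logb (1 / ε₀) (w e)⌋₊)
    (Mfam : ℕ → Finset (Sym2 V))
    (hMfam : ∀ i < k, IsMatching G (Mfam i) ∧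
      Mfam i ⊆ G.edgeFinset.filter (fun e => b e % k ≠ i))
    (hMapprox : ∀ i < k, ∀ N : Finset (Sym2 V), IsMatching G N →
      N ⊆ G.edgeFinset.filter (fun e => b e % k ≠ i) →
      (1 - 4 * ε₀) * mWeight w N ≤ mWeight w (Mfam i))
    (N : Finset (Sym2 V)) (hN : IsMatching G N) :
    ∃ i < k, (1 - 5 * ε₀) * mWeight w N ≤ mWeight w (Mfam i) := by

  classical
  have hNE : N ⊆ G.edgeFinset := by
    intro e he
    rw [SimpleGraph.mem_edgeFinset]
    exact hN.1 he
  have hkpos : 0 < k := by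
    rw [hk]
    exact Nat.ceil_pos.2 (by positivity)
  have hkε : 1 ≤ (k : ℝ) * ε₀ := by
    have h1 : (1 : ℝ) / ε₀ ≤ k := by rw [hk]; exact Nat.le_ceil _
    rw [div_le_iff₀ hε0] at h1
    linarith
  have hWN : 0 ≤ mWeight w N :=
    Finset.sum_nonneg fun e he => le_trans zero_le_one (hw e (hNE he))
  -- key sum identity
  have hkey : ∑ i ∈ Finset.range k, mWeight w (N.filter (fun e => b e % k ≠ i))
      = ((k : ℝ) - 1) * mWeight w N := by
    unfold mWeight
    have h1 : ∀ i, ∑ e ∈ N.filter (fun e => b e % k ≠ i), w e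
        = ∑ e ∈ N, if b e % k ≠ i then w e else 0 :=
      fun i => Finset.sum_filter _ _
    simp_rw [h1]
    rw [Finset.sum_comm]
    rw [Finset.mul_sum]
    refine Finset.sum_congr rfl fun e he => ?_
    have hc : b e % k ∈ Finset.range k := Finset.mem_range.2 (Nat.mod_lt _ hkpos)
    calc ∑ i ∈ Finset.range k, (if b e % k ≠ i then w e else 0)
        = ∑ i ∈ Finset.range k, (w e - if b e % k = i then w e else 0) := by
          refine Finset.sum_congr rfl fun i _ => ?_
          by_cases h : b e % k = i <;> simp [h]
      _ = (k : ℝ) * w e - w e := by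
          rw [Finset.sum_sub_distrib, Finset.sum_const, Finset.sum_ite_eq, if_pos hc,
            Finset.card_range, nsmul_eq_mul]
      _ = ((k : ℝ) - 1) * w e := by ring
  -- averaging
  obtain ⟨i, hi, hle⟩ := Finset.exists_le_of_sum_le
    (f := fun _ => (((k : ℝ) - 1) * mWeight w N) / k)
    (g := fun i => mWeight w (N.filter (fun e => b e % k ≠ i)))
    (Finset.nonempty_range_iff.2 hkpos.ne')
    (by
      rw [hkey, Finset.sum_const, Finset.card_range, nsmul_eq_mul]
      rw [mul_div_cancel₀]
      exact_mod_cast hkpos.ne')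
  rw [Finset.mem_range] at hi
  refine ⟨i, hi, ?_⟩
  -- N ∩ E_i is a matching contained in E_i
  set Ni := N.filter (fun e => b e % k ≠ i) with hNi
  have hNiM : IsMatching G Ni := by
    constructor
    · intro e he
      exact hN.1 (Finset.filter_subset _ _ (by exact_mod_cast he))
    · intro e heM f hfM
      exact hN.2 e (Finset.filter_subset _ _ heM) f (Finset.filter_subset _ _ hfM)
  have hNiE : Ni ⊆ G.edgeFinset.filter (fun e => b e % k ≠ i) :=
    Finset.filter_subset_filter _ hNE
  have happ := hMapprox i hi Ni hNiM hNiE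
  have hNiW : 0 ≤ mWeight w Ni :=
    Finset.sum_nonneg fun e he => le_trans zero_le_one (hw e (hNE (Finset.filter_subset _ _ he)))
  have hkR : (1 : ℝ) ≤ k := by exact_mod_cast hkpos
  have hle' : ((k : ℝ) - 1) * mWeight w N ≤ (k : ℝ) * mWeight w Ni := by
    rw [div_le_iff₀ (by positivity)] at hle
    linarith [hle]
  have h4 : (0 : ℝ) ≤ 1 - 4 * ε₀ := by linarith
  nlinarith [mul_le_mul_of_nonneg_left hle' h4, mul_le_mul_of_nonneg_left happ (le_trans zero_le_one hkR), mul_nonneg hWN hε0.le]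
end
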